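/- arXiv:1804.05277 — 2 statements merged into one kernel-verified Lean document; each statement's English description precedes it below -/
import Mathlib

section
/- For every integer k ≥ 1, the number of brick-wall lattice paths of the second type in the rectangle R = {0,…,2k−1} × {0,1,2,3} (width w = 4, even length l = 2k) equals 8·3^{k−1}, i.e. B^{(2)}_{2k,4} = 8·3^{k−1}. -/
/-- A step of a brick-wall lattice path. `t = true` corresponds to paths of the
first type (up-steps from even points, down-steps from odd points), `t = false`
to paths of the second type (up-steps from odd points, down-steps from even
points). Vertical steps are forbidden from points with first coordinate `0`. -/
def BrickStep (t : Bool) (p q : ℤ × ℤ) : Prop :=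
  q = (p.1 + 1, p.2) ∨
  (q = (p.1, p.2 + 1) ∧ p.1 ≠ 0 ∧ (if t then Even (p.1 + p.2) else Odd (p.1 + p.2))) ∨
  (q = (p.1, p.2 - 1) ∧ p.1 ≠ 0 ∧ (if t then Odd (p.1 + p.2) else Even (p.1 + p.2)))

/-- The set of brick-wall lattice paths (of the first type if `t = true`, of the
second type if `t = false`) in the rectangle `{0,…,l−1} × {0,…,w−1}`: nonempty
lists of pairwise distinct points of the rectangle, starting on the left side,
ending on the right side, whose consecutive differences are admissible steps. -/
def brickPaths (t : Bool) (l w : ℤ) : Set (List (ℤ × ℤ)) :=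
  {v | v ≠ [] ∧ v.Nodup ∧
    (∀ p ∈ v, 0 ≤ p.1 ∧ p.1 ≤ l - 1 ∧ 0 ≤ p.2 ∧ p.2 ≤ w - 1) ∧
    (∀ p ∈ v.head?, p.1 = 0) ∧
    (∀ p ∈ v.getLast?, p.1 = l - 1) ∧
    List.Chain' (BrickStep t) v}

/-! In the brick wall of the second type every point `(x, y)` with `x ≠ 0` has exactly one
vertical neighbour `(x, verticalNeighbour x y)`, and that edge may be walked in either direction.
Two consecutive vertical steps would therefore return to a visited point, so a path ending at
`(x, y)` is a path ending at `(x - 1, y)` or at `(x - 1, verticalNeighbour x y)`, followed by the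
one or two points it visits in column `x`, and the number of paths ending at `(x, y)` is the sum
of the numbers ending at these two points of column `x - 1`. For width 4 every row of
column 0 is reached once and every row of column 1 twice; after that an even column (joining rows
1 and 2) followed by an odd one (joining rows 0, 1 and rows 2, 3) multiplies the constant count of
each row by 3. Summing over the four end rows gives `8 · 3 ^ (k - 1)`. -/

def verticalNeighbour (x y : ℤ) : ℤ :=
  if Odd (x + y) then y + 1 else y - 1

lemma verticalNeighbour_ne (x y : ℤ) : verticalNeighbour x y ≠ y := by
  unfold verticalNeighbour; split_ifs <;> omega

lemma verticalNeighbour_verticalNeighbour (x y : ℤ) :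
    verticalNeighbour x (verticalNeighbour x y) = y := by
  simp only [verticalNeighbour, Int.odd_iff]
  split_ifs <;> omega

lemma brickStep_false_iff {p q : ℤ × ℤ} :
    BrickStep false p q ↔
      p = (q.1 - 1, q.2) ∨ q.1 ≠ 0 ∧ p = (q.1, verticalNeighbour q.1 q.2) := by
  simp only [BrickStep, verticalNeighbour, Prod.ext_iff, Bool.false_eq_true, if_false,
    Int.odd_iff, Int.even_iff]
  split_ifs <;> omega

lemma brickStep_fst_le {t : Bool} {p q : ℤ × ℤ} (h : BrickStep t p q) : p.1 ≤ q.1 := by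
  rcases h with h | ⟨h, _⟩ | ⟨h, _⟩ <;> simp [h]

lemma fst_le_of_isChain_brickStep {t : Bool} {v : List (ℤ × ℤ)} {p r : ℤ × ℤ}
    (h : v.IsChain (BrickStep t)) (hlast : v.getLast? = some p) (hr : r ∈ v) : r.1 ≤ p.1 := by
  obtain ⟨u, rfl⟩ := List.getLast?_eq_some_iff.mp hlast
  have hmono : ((u ++ [p]).map Prod.fst).IsChain (· ≤ ·) :=
    List.isChain_map_of_isChain Prod.fst (fun _ _ => brickStep_fst_le) h
  rw [List.isChain_iff_pairwise, List.map_append, List.pairwise_append] at hmono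
  rcases List.mem_append.mp hr with hr | hr
  · exact hmono.2.2 _ (List.mem_map_of_mem hr) _ (List.mem_singleton_self _)
  · rw [List.mem_singleton.mp hr]

lemma Set.Finite.finite_nodup_lists {α : Type*} {S : Set α} (hS : S.Finite) :
    {v : List α | v.Nodup ∧ ∀ p ∈ v, p ∈ S}.Finite := by
  have := hS.to_subtype
  have := Fintype.ofFinite S
  refine (Set.finite_range fun v : {v : List S // v.Nodup} => v.1.map Subtype.val).subset ?_
  rintro v ⟨hnd, hS⟩
  lift v to List S using hS
  exact ⟨⟨v, hnd.of_map _⟩, rfl⟩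

lemma brickPaths_finite (t : Bool) (l w : ℤ) : (brickPaths t l w).Finite := by
  refine (Set.finite_Icc (0, 0) (l - 1, w - 1)).finite_nodup_lists.subset ?_
  rintro v ⟨-, hnd, hbd, -⟩
  exact ⟨hnd, fun p hp => by have := hbd p hp; simp only [Set.mem_Icc, Prod.le_def]; omega⟩

section
variable {t : Bool} {l l' w : ℤ} {u : List (ℤ × ℤ)} {p q : ℤ × ℤ}

lemma concat_mem_brickPaths (hu : u ∈ brickPaths t l w) (hll' : l ≤ l')
    (hlast : u.getLast? = some p) (hstep : BrickStep t p q) (hqu : q ∉ u)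
    (hq : q.1 = l' - 1 ∧ 0 ≤ q.2 ∧ q.2 ≤ w - 1) : u ++ [q] ∈ brickPaths t l' w := by
  obtain ⟨hne, hnd, hbd, hhead, -, hchain⟩ := hu
  have hq₁ : 0 ≤ q.1 := by
    obtain ⟨p, hp⟩ := List.exists_mem_of_ne_nil u hne
    have := hbd p hp
    omega
  refine ⟨by simp, ?_, ?_, ?_, by simp [hq.1], ?_⟩
  · rw [← List.concat_eq_append, List.nodup_concat]
    exact ⟨hqu, hnd⟩
  · simp only [List.mem_append, List.mem_singleton]
    rintro p (hp | rfl)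
    · have := hbd p hp; omega
    · omega
  · rwa [List.head?_append_of_ne_nil _ hne]
  · refine List.isChain_append.mpr ⟨hchain, List.isChain_singleton q, fun p' hp' q' hq' => ?_⟩
    rw [hlast, Option.mem_some_iff] at hp'
    rw [List.head?_cons, Option.mem_some_iff] at hq'
    exact hp' ▸ hq' ▸ hstep

lemma mem_brickPaths_of_concat (hv : u ++ [q] ∈ brickPaths t l w)
    (hlast : u.getLast? = some p) (hp : p.1 = l' - 1) :
    u ∈ brickPaths t l' w ∧ BrickStep t p q := by
  obtain ⟨-, hnd, hbd, hhead, -, hchain⟩ := hv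
  have hne : u ≠ [] := by rintro rfl; simp at hlast
  obtain ⟨hchain_u, -, hlink⟩ := List.isChain_append.mp hchain
  refine ⟨⟨hne, hnd.sublist (List.sublist_append_left u [q]), fun r hr => ?_, ?_,
    by simp [hlast, hp], hchain_u⟩, hlink p hlast q rfl⟩
  · have := hbd r (List.mem_append_left _ hr)
    have := fst_le_of_isChain_brickStep hchain_u hlast hr
    omega
  · rwa [List.head?_append_of_ne_nil _ hne] at hhead
end

lemma exists_concat_of_mem_brickPaths {t : Bool} {l w : ℤ} {v : List (ℤ × ℤ)} {q : ℤ × ℤ}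
    (hv : v ∈ brickPaths t l w) (hlast : v.getLast? = some q) (hq : q.1 ≠ 0) :
    ∃ u p, v = u ++ [q] ∧ u.getLast? = some p ∧ u ∈ brickPaths t (p.1 + 1) w ∧
      BrickStep t p q := by
  obtain ⟨u, rfl⟩ := List.getLast?_eq_some_iff.mp hlast
  have hne : u ≠ [] := by
    rintro rfl
    exact hq (hv.2.2.2.1 q rfl)
  have hlast_u := List.getLast?_eq_some_getLast hne
  exact ⟨u, _, rfl, hlast_u, mem_brickPaths_of_concat hv hlast_u (by ring)⟩

def brickPathsTo (l w y : ℤ) : Set (List (ℤ × ℤ)) :=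
  {v | v ∈ brickPaths false l w ∧ v.getLast? = some (l - 1, y)}

section
variable {l w y : ℤ}

lemma mk_notMem_of_mem_brickPathsTo {u : List (ℤ × ℤ)} (hu : u ∈ brickPathsTo l w y)
    (z : ℤ) : (l, z) ∉ u := fun h => by
  have := (hu.1.2.2.1 _ h).2.1
  omega

lemma brickPathsTo_succ (hl : 1 ≤ l) (hy : 0 ≤ y) (hyw : y < w) :
    brickPathsTo (l + 1) w y =
      (· ++ [(l, y)]) '' brickPathsTo l w y ∪
      (· ++ [(l, verticalNeighbour l y), (l, y)]) '' brickPathsTo l w (verticalNeighbour l y) := by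
  ext v
  constructor
  · rintro ⟨hv, hlast⟩
    rw [add_sub_cancel_right] at hlast
    obtain ⟨u, p, rfl, hlast_u, hu, hstep⟩ :=
      exists_concat_of_mem_brickPaths hv hlast (by dsimp only; omega)
    rcases brickStep_false_iff.mp hstep with rfl | ⟨-, rfl⟩
    · exact Or.inl ⟨u, ⟨by simpa using hu, hlast_u⟩, rfl⟩
    obtain ⟨u', r, rfl, hlast_u', hu', hstep'⟩ :=
      exists_concat_of_mem_brickPaths hu hlast_u (by dsimp only; omega)
    rcases brickStep_false_iff.mp hstep' with rfl | ⟨-, rfl⟩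
    · exact Or.inr ⟨u', ⟨by simpa using hu', hlast_u'⟩, by simp⟩
    · have hmem : (l, y) ∈ u' := by
        simpa [verticalNeighbour_verticalNeighbour] using List.mem_of_getLast? hlast_u'
      exact absurd rfl <| (List.nodup_append.mp hv.2.1).2.2 _ (List.mem_append_left _ hmem) _
        (List.mem_singleton_self _)
  · rintro (⟨u, hu, rfl⟩ | ⟨u, hu, rfl⟩)
    · exact ⟨concat_mem_brickPaths hu.1 (by omega) hu.2 (brickStep_false_iff.mpr (Or.inl rfl))
        (mk_notMem_of_mem_brickPathsTo hu y) ⟨by ring, hy, by omega⟩, by simp⟩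
    · have hy' := (hu.1.2.2.1 _ (List.mem_of_getLast? hu.2)).2.2
      have hu₁ : u ++ [(l, verticalNeighbour l y)] ∈ brickPaths false (l + 1) w :=
        concat_mem_brickPaths hu.1 (by omega) hu.2 (brickStep_false_iff.mpr (Or.inl rfl))
          (mk_notMem_of_mem_brickPathsTo hu _) ⟨by ring, hy'⟩
      have hu₂ := concat_mem_brickPaths (q := (l, y)) hu₁ le_rfl (by simp)
        (brickStep_false_iff.mpr (Or.inr ⟨by omega, rfl⟩))
        (by simpa [mk_notMem_of_mem_brickPathsTo hu y] using (verticalNeighbour_ne l y).symm)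
        ⟨by ring, hy, by omega⟩
      exact ⟨by simpa using hu₂, by simp⟩
lemma brickPathsTo_finite : (brickPathsTo l w y).Finite :=
  (brickPaths_finite false l w).subset fun _ hv => hv.1

lemma brickPathsTo_eq_empty (hy : y < 0 ∨ w ≤ y) : brickPathsTo l w y = ∅ :=
  Set.eq_empty_of_forall_notMem fun _ hv => by
    have := (hv.1.2.2.1 _ (List.mem_of_getLast? hv.2)).2.2
    omega

lemma brickPathsTo_one (hy : 0 ≤ y) (hyw : y < w) : brickPathsTo 1 w y = {[(0, y)]} := by
  ext v
  constructor
  · rintro ⟨⟨hne, -, hbd, -, -, hchain⟩, hlast⟩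
    match v, hchain with
    | [], _ => exact absurd rfl hne
    | [a], _ => simpa using hlast
    | a :: b :: _, hchain =>
      have ha := hbd a (by simp)
      have hb := hbd b (by simp)
      rcases brickStep_false_iff.mp (List.isChain_cons_cons.mp hchain).1 with rfl | ⟨hb₁, -⟩
      all_goals omega
  · rintro rfl
    refine ⟨⟨by simp, by simp, ?_, by simp, by simp, List.isChain_singleton _⟩, by simp⟩
    simp only [List.mem_singleton, forall_eq]
    omega

lemma ncard_brickPathsTo_succ (hl : 1 ≤ l) (hy : 0 ≤ y) (hyw : y < w) :
    (brickPathsTo (l + 1) w y).ncard =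
      (brickPathsTo l w y).ncard + (brickPathsTo l w (verticalNeighbour l y)).ncard := by
  have hdisj : Disjoint ((· ++ [(l, y)]) '' brickPathsTo l w y) ((· ++ [(l, verticalNeighbour l y),
      (l, y)]) '' brickPathsTo l w (verticalNeighbour l y)) := by
    refine Set.disjoint_left.mpr ?_
    rintro _ ⟨u, hu, rfl⟩ ⟨u', -, heq⟩
    have hu' : u' ++ [(l, verticalNeighbour l y)] = u :=
      List.append_left_injective [(l, y)] (by simpa using heq)
    exact mk_notMem_of_mem_brickPathsTo hu (verticalNeighbour l y) (by rw [← hu']; simp)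
  rw [brickPathsTo_succ hl hy hyw, Set.ncard_union_eq hdisj (brickPathsTo_finite.image _)
    (brickPathsTo_finite.image _), Set.ncard_image_of_injective _ (List.append_left_injective _),
    Set.ncard_image_of_injective _ (List.append_left_injective _)]

lemma ncard_brickPaths_eq_sum :
    (brickPaths false l w).ncard = ∑ y ∈ Finset.Ico 0 w, (brickPathsTo l w y).ncard := by
  have hunion : brickPaths false l w = ⋃ y ∈ (Finset.Ico 0 w : Set ℤ), brickPathsTo l w y := by
    ext v
    simp only [Set.mem_iUnion, Finset.coe_Ico, Set.mem_Ico, exists_prop]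
    refine ⟨fun hv => ?_, fun ⟨_, _, hv⟩ => hv.1⟩
    obtain ⟨q, hq⟩ := Option.ne_none_iff_exists'.mp (List.getLast?_eq_none_iff.not.mpr hv.1)
    have hbd := hv.2.2.1 q (List.mem_of_getLast? hq)
    exact ⟨q.2, by omega, hv, by rw [hq, ← hv.2.2.2.2.1 q hq]⟩
  rw [hunion, Set.Finite.ncard_biUnion (Finset.finite_toSet _) (fun _ _ => brickPathsTo_finite),
    finsum_mem_coe_finset]
  intro y _ y' _ hyy'
  refine Set.disjoint_left.mpr fun v hv hv' => hyy' ?_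
  simpa using hv.2.symm.trans hv'.2
end

lemma ncard_brickPathsTo_two_four {y : ℤ} (hy : 0 ≤ y) (hy4 : y < 4) :
    (brickPathsTo 2 4 y).ncard = 2 := by
  rw [show (2 : ℤ) = 1 + 1 by norm_num, ncard_brickPathsTo_succ le_rfl hy hy4]
  interval_cases y <;> norm_num [brickPathsTo_one, verticalNeighbour, Int.odd_iff]

lemma ncard_brickPathsTo_add_two_four {m : ℤ} (hm : 1 ≤ m) {c : ℕ}
    (hc : ∀ y, 0 ≤ y → y < 4 → (brickPathsTo (2 * m) 4 y).ncard = c) {y : ℤ} (hy : 0 ≤ y)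
    (hy4 : y < 4) : (brickPathsTo (2 * m + 1 + 1) 4 y).ncard = 3 * c := by
  have h₁ := fun y => ncard_brickPathsTo_succ (l := 2 * m) (w := 4) (y := y) (by omega)
  have h₂ := fun y => ncard_brickPathsTo_succ (l := 2 * m + 1) (w := 4) (y := y) (by omega)
  have hlo : brickPathsTo (2 * m) 4 (-1) = ∅ := brickPathsTo_eq_empty (by norm_num)
  have hhi : brickPathsTo (2 * m) 4 4 = ∅ := brickPathsTo_eq_empty (by norm_num)
  interval_cases y <;>
    simp [h₁, h₂, hc, hlo, hhi, verticalNeighbour, Int.odd_iff, Int.add_emod] <;> ring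

lemma ncard_brickPathsTo_even_four (k : ℕ) (hk : 1 ≤ k) {y : ℤ} (hy : 0 ≤ y) (hy4 : y < 4) :
    (brickPathsTo (2 * k) 4 y).ncard = 2 * 3 ^ (k - 1) := by
  induction k, hk using Nat.le_induction generalizing y with
  | base => simpa using ncard_brickPathsTo_two_four hy hy4
  | succ k hk ih =>
    obtain ⟨j, rfl⟩ := Nat.exists_eq_add_of_le' hk
    rw [show (2 * ((j + 1 + 1 : ℕ) : ℤ)) = 2 * (j + 1 : ℕ) + 1 + 1 by push_cast; ring,
      ncard_brickPathsTo_add_two_four (by omega) (fun _ => ih) hy hy4]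
    simp only [Nat.add_sub_cancel]
    ring

/-- For every integer `k ≥ 1`, the number of brick-wall lattice paths of the
second type in the rectangle `{0,…,2k−1} × {0,1,2,3}` (width 4, even length
`l = 2k`) equals `8 · 3^(k−1)`. -/
theorem brickPaths_second_width_four_even_length (k : ℕ) (hk : 1 ≤ k) :
    (brickPaths false (2 * (k : ℤ)) 4).ncard = 8 * 3 ^ (k - 1) := by
  rw [ncard_brickPaths_eq_sum, Finset.sum_congr rfl fun y hy =>
    ncard_brickPathsTo_even_four k hk (Finset.mem_Ico.mp hy).1 (Finset.mem_Ico.mp hy).2]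
  simp only [Finset.sum_const, Int.card_Ico, sub_zero, Int.reduceToNat, smul_eq_mul]
  ring
end

section
/- Let M_− be the 4×4 integer matrix with rows (1,0,0,0), (0,1,1,0), (0,1,1,0), (0,0,0,1) and M_+ the 4×4 integer matrix with rows (1,1,0,0), (1,1,0,0), (0,0,1,1), (0,0,1,1); let u = (1,1,1,1) be the all-ones row vector and b_0 = (1,1,1,1)^T the all-ones column vector. Then for every integer k ≥ 1, u·M_+·(M_−·M_+)^{k−1}·b_0 = 8·3^{k−1}. -/
/-!
The all-ones row vector `u` is a left eigenvector of `M₊` (every column sums to 2) and of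
`M₋ * M₊` (every column sums to 3), so `u * M₊ * (M₋ * M₊) ^ (k - 1) = 2 * 3 ^ (k - 1) • u`,
and pairing with `b₀` multiplies by `u ⬝ᵥ b₀ = 4`.
-/

open Matrix

abbrev mPlus : Matrix (Fin 4) (Fin 4) ℤ := !![1, 1, 0, 0; 1, 1, 0, 0; 0, 0, 1, 1; 0, 0, 1, 1]

abbrev mMinus : Matrix (Fin 4) (Fin 4) ℤ := !![1, 0, 0, 0; 0, 1, 1, 0; 0, 1, 1, 0; 0, 0, 0, 1]

theorem Matrix.vecMul_pow_of_vecMul_eq_smul {n R : Type*} [Fintype n] [DecidableEq n]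
    [CommSemiring R] {A : Matrix n n R} {v : n → R} {c : R} (h : v ᵥ* A = c • v) (k : ℕ) :
    v ᵥ* A ^ k = c ^ k • v := by
  induction k with
  | zero => simp
  | succ k ih => rw [pow_succ, ← vecMul_vecMul, ih, smul_vecMul, h, smul_smul, pow_succ]

theorem ones_vecMul_mPlus : (fun _ => 1 : Fin 4 → ℤ) ᵥ* mPlus = 2 • fun _ => 1 := by
  decide

theorem ones_vecMul_mMinus_mul_mPlus :
    (fun _ => 1 : Fin 4 → ℤ) ᵥ* (mMinus * mPlus) = 3 • fun _ => 1 := by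
  decide

theorem ones_vecMul_mPlus_mul_pow_mulVec_ones_general (k : ℕ) :
    (fun _ : Fin 4 => (1 : ℤ)) ⬝ᵥ
        ((!![1, 1, 0, 0; 1, 1, 0, 0; 0, 0, 1, 1; 0, 0, 1, 1] :
              Matrix (Fin 4) (Fin 4) ℤ) *
            ((!![1, 0, 0, 0; 0, 1, 1, 0; 0, 1, 1, 0; 0, 0, 0, 1] :
                Matrix (Fin 4) (Fin 4) ℤ) *
              (!![1, 1, 0, 0; 1, 1, 0, 0; 0, 0, 1, 1; 0, 0, 1, 1] :
                Matrix (Fin 4) (Fin 4) ℤ)) ^ (k - 1)).mulVec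
          (fun _ : Fin 4 => (1 : ℤ)) =
      8 * 3 ^ (k - 1) := by
  change _ ⬝ᵥ (mPlus * (mMinus * mPlus) ^ (k - 1)) *ᵥ _ = _
  rw [dotProduct_mulVec, ← vecMul_vecMul, ones_vecMul_mPlus, smul_vecMul,
    vecMul_pow_of_vecMul_eq_smul ones_vecMul_mMinus_mul_mPlus]
  simp [dotProduct]
  ring

/-- Let `M₋` be the 4×4 integer matrix with rows `(1,0,0,0)`, `(0,1,1,0)`,
`(0,1,1,0)`, `(0,0,0,1)` and `M₊` the 4×4 integer matrix with rows `(1,1,0,0)`,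
`(1,1,0,0)`, `(0,0,1,1)`, `(0,0,1,1)`; let `u = (1,1,1,1)` be the all-ones row
vector and `b₀ = (1,1,1,1)ᵀ` the all-ones column vector. For every integer
`k ≥ 1`, `u · M₊ · (M₋ · M₊)^(k−1) · b₀ = 8 · 3^(k−1)`. -/
theorem ones_vecMul_mPlus_mul_pow_mulVec_ones (k : ℕ) (hk : 1 ≤ k) :
    (fun _ : Fin 4 => (1 : ℤ)) ⬝ᵥ
        ((!![1, 1, 0, 0; 1, 1, 0, 0; 0, 0, 1, 1; 0, 0, 1, 1] :
              Matrix (Fin 4) (Fin 4) ℤ) *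
            ((!![1, 0, 0, 0; 0, 1, 1, 0; 0, 1, 1, 0; 0, 0, 0, 1] :
                Matrix (Fin 4) (Fin 4) ℤ) *
              (!![1, 1, 0, 0; 1, 1, 0, 0; 0, 0, 1, 1; 0, 0, 1, 1] :
                Matrix (Fin 4) (Fin 4) ℤ)) ^ (k - 1)).mulVec
          (fun _ : Fin 4 => (1 : ℤ)) =
      8 * 3 ^ (k - 1) :=
  ones_vecMul_mPlus_mul_pow_mulVec_ones_general k
end
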